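/- Let E and D be positive integers and define the simplified load-balancing loss L_bal(P) := ‖(1/N) Σ_{i=1}^{N} softmax(P(μ + ξ_i)) − (1/E)·𝟙‖₂² for a real E × D matrix P, μ ∈ ℝ^D, and ξ_1, …, ξ_N ∈ ℝ^D. There exists a constant C > 0, depending only on E, with the following property. For every positive integer N, every such P, μ, ξ_1, …, ξ_N with Σ_{i=1}^{N} ξ_i = 0, and every ε ∈ (0, 1], if max_{1 ≤ i ≤ N} ‖P(μ + ξ_i)‖₂ ≤ ε, then ‖Π_E P μ‖₂² ≤ E² · L_bal(P) + C ε³; in particular, any near-minimizer of L_bal must have Π_E P μ close to 0. -/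

import Mathlib

/-!
Write `zᵢ = P(μ + ξᵢ)`; since `∑ ξᵢ = 0`, their mean is `Pμ`. For `‖z‖ ≤ 1` softmax has the
expansion `softmax z = E⁻¹ 𝟙 + E⁻¹ Π_E z + O(‖z‖²)`, and averaging it over the `zᵢ` gives
`E (mean softmax(zᵢ) − E⁻¹ 𝟙) = Π_E Pμ + O(ε²)`. The left side has squared norm `E² L_bal`, and
`‖Π_E Pμ‖ ≤ ‖Pμ‖ ≤ ε` because `Π_E` is an orthogonal projection, so squaring the `O(ε²)`
perturbation costs only `O(ε³)`.
-/

open Matrix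

/-- Coordinatewise softmax on Euclidean space ℝ^E. -/
noncomputable def softmax {E : ℕ} (z : EuclideanSpace ℝ (Fin E)) : EuclideanSpace ℝ (Fin E) :=
  WithLp.toLp 2 (fun e => Real.exp (z e) / ∑ j, Real.exp (z j))

/-- The all-ones vector 𝟙 ∈ ℝ^E. -/
def onesE (E : ℕ) : EuclideanSpace ℝ (Fin E) := WithLp.toLp 2 (fun _ => 1)

/-- The orthogonal projector onto the orthogonal complement of the all-ones vector:
`Π_E = I_E - (1/E) 𝟙𝟙ᵀ`. -/
noncomputable def projE (E : ℕ) : Matrix (Fin E) (Fin E) ℝ :=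
  1 - (E : ℝ)⁻¹ • vecMulVec (fun _ => 1) (fun _ => 1)

/-- Matrix acting on Euclidean space vectors. -/
noncomputable def matApp {E D : ℕ} (P : Matrix (Fin E) (Fin D) ℝ)
    (x : EuclideanSpace ℝ (Fin D)) : EuclideanSpace ℝ (Fin E) :=
  Matrix.toEuclideanLin P x

/-- The simplified load-balancing loss
`L_bal(P) = ‖(1/N) Σᵢ softmax(P(μ + ξᵢ)) − (1/E)𝟙‖₂²`. -/
noncomputable def Lbal {E D N : ℕ} (P : Matrix (Fin E) (Fin D) ℝ)
    (μ : EuclideanSpace ℝ (Fin D)) (ξ : Fin N → EuclideanSpace ℝ (Fin D)) : ℝ :=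
  ‖(N : ℝ)⁻¹ • (∑ i, softmax (matApp P (μ + ξ i))) - (E : ℝ)⁻¹ • onesE E‖ ^ 2

open Finset Real

section Coordinates

variable {ι : Type*} [Fintype ι]

lemma EuclideanSpace.abs_apply_le_norm (x : EuclideanSpace ℝ ι) (i : ι) : |x i| ≤ ‖x‖ := by
  simpa using PiLp.norm_apply_le x i

lemma EuclideanSpace.norm_le_sqrt_card_mul_of_forall_abs_le {x : EuclideanSpace ℝ ι} {B : ℝ}
    (hB : 0 ≤ B) (hx : ∀ i, |x i| ≤ B) : ‖x‖ ≤ √(Fintype.card ι) * B := by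
  refine (pow_le_pow_iff_left₀ (norm_nonneg x) (by positivity) two_ne_zero).mp ?_
  calc ‖x‖ ^ 2 = ∑ i, |x i| ^ 2 := by simp [EuclideanSpace.real_norm_sq_eq]
    _ ≤ ∑ _i : ι, B ^ 2 := by gcongr with i; exact hx i
    _ = (√(Fintype.card ι) * B) ^ 2 := by simp [mul_pow]

end Coordinates

lemma norm_sq_le_norm_sq_add {F : Type*} [SeminormedAddCommGroup F] (x y : F) :
    ‖x‖ ^ 2 ≤ ‖y‖ ^ 2 + ‖x - y‖ * (2 * ‖x‖ + ‖x - y‖) := by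
  have hxy : ‖x‖ - ‖x - y‖ ≤ ‖y‖ := by linarith [norm_le_insert' x y]
  rcases le_total ‖x‖ ‖x - y‖ with h | h
  · nlinarith [norm_nonneg x, norm_nonneg y]
  · nlinarith [pow_le_pow_left₀ (sub_nonneg.mpr h) hxy 2, sq_nonneg ‖x - y‖]

lemma norm_inv_natCast_smul_sum_le {F : Type*} [SeminormedAddCommGroup F] [NormedSpace ℝ F]
    {N : ℕ} (hN : 0 < N) {g : Fin N → F} {B : ℝ} (hg : ∀ i, ‖g i‖ ≤ B) :
    ‖(N : ℝ)⁻¹ • ∑ i, g i‖ ≤ B := by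
  have hN' : (0 : ℝ) < N := by exact_mod_cast hN
  rw [norm_smul, norm_inv, RCLike.norm_natCast, inv_mul_le_iff₀ hN']
  calc ‖∑ i, g i‖ ≤ ∑ i, ‖g i‖ := norm_sum_le _ _
    _ ≤ ∑ _i : Fin N, B := sum_le_sum fun i _ => hg i
    _ = N * B := by simp

section Matrices

variable {E D : ℕ}

lemma matApp_apply (P : Matrix (Fin E) (Fin D) ℝ) (x : EuclideanSpace ℝ (Fin D)) (e : Fin E) :
    matApp P x e = ∑ j, P e j * x j := by
  simp [matApp, Matrix.toEuclideanLin, Matrix.toLin'_apply, Matrix.mulVec, dotProduct]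

lemma matApp_sum {N : ℕ} (P : Matrix (Fin E) (Fin D) ℝ) (x : Fin N → EuclideanSpace ℝ (Fin D)) :
    matApp P (∑ i, x i) = ∑ i, matApp P (x i) :=
  map_sum (Matrix.toEuclideanLin P) x univ

lemma matApp_smul (P : Matrix (Fin E) (Fin D) ℝ) (c : ℝ) (x : EuclideanSpace ℝ (Fin D)) :
    matApp P (c • x) = c • matApp P x :=
  map_smul (Matrix.toEuclideanLin P) c x

lemma projE_apply (z : EuclideanSpace ℝ (Fin E)) (e : Fin E) :
    matApp (projE E) z e = z e - (E : ℝ)⁻¹ * ∑ j, z j := by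
  simp only [matApp_apply, projE, Matrix.sub_apply, Matrix.one_apply, Matrix.smul_apply,
    Matrix.vecMulVec_apply, smul_eq_mul, mul_one, sub_mul, ite_mul, one_mul, zero_mul,
    sum_sub_distrib, sum_ite_eq, mem_univ, if_true, mul_sum]

lemma norm_matApp_projE_le (z : EuclideanSpace ℝ (Fin E)) : ‖matApp (projE E) z‖ ≤ ‖z‖ := by
  refine (pow_le_pow_iff_left₀ (norm_nonneg _) (norm_nonneg z) two_ne_zero).mp ?_
  simp only [EuclideanSpace.real_norm_sq_eq, projE_apply]
  set m := (E : ℝ)⁻¹ * ∑ j, z j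
  have hm : ∑ e, (z e - m) ^ 2 = ∑ e, z e ^ 2 - (E : ℝ)⁻¹ * (∑ j, z j) ^ 2 := by
    rcases eq_or_ne (E : ℝ) 0 with hE | hE
    · simp [m, hE]
    · simp only [sub_sq, sum_add_distrib, sum_sub_distrib, ← sum_mul, ← mul_sum, sum_const,
        card_univ, Fintype.card_fin, nsmul_eq_mul, m]
      field_simp
      ring
  rw [hm]
  have : 0 ≤ (E : ℝ)⁻¹ * (∑ j, z j) ^ 2 := by positivity
  linarith

end Matrices

lemma abs_softmaxRemainder_numerator_le {E n x r Z R : ℝ} (hE : 1 ≤ E) (hn : n ≤ 1)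
    (hx : |x| ≤ n) (hr : |r| ≤ n ^ 2) (hZ : |Z| ≤ E * n) (hR : |R| ≤ n ^ 2) :
    |E ^ 2 * r - E * R - (Z + R) * (E * x - Z)| ≤ 6 * E ^ 2 * n ^ 2 := by
  have hn0 : 0 ≤ n := (abs_nonneg x).trans hx
  have hZR : |Z + R| ≤ E * n + n ^ 2 := (abs_add_le Z R).trans (add_le_add hZ hR)
  have hxZ : |E * x - Z| ≤ 2 * E * n := by
    calc |E * x - Z| ≤ E * |x| + |Z| := by
          simpa [abs_mul, abs_of_nonneg (zero_le_one.trans hE)] using abs_sub (E * x) Z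
      _ ≤ 2 * E * n := by nlinarith
  calc |E ^ 2 * r - E * R - (Z + R) * (E * x - Z)|
      ≤ |E ^ 2 * r| + |E * R| + |(Z + R) * (E * x - Z)| :=
        (abs_sub _ _).trans (add_le_add_left (abs_sub _ _) _)
    _ = E ^ 2 * |r| + E * |R| + |Z + R| * |E * x - Z| := by
        simp only [abs_mul, abs_pow, abs_of_nonneg (zero_le_one.trans hE)]
    _ ≤ E ^ 2 * n ^ 2 + E * n ^ 2 + (E * n + n ^ 2) * (2 * E * n) := by
        gcongr
    _ ≤ 6 * E ^ 2 * n ^ 2 := by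
        have hEn : E * n ^ 2 ≤ E ^ 2 * n ^ 2 := by
          nlinarith [mul_le_mul_of_nonneg_right hE (by positivity : 0 ≤ E * n ^ 2)]
        have hn3 : E * n ^ 3 ≤ E * n ^ 2 := by
          have : n ^ 3 ≤ n ^ 2 := by nlinarith [sq_nonneg n]
          nlinarith
        nlinarith

section Softmax

variable {E : ℕ}

/-- `E⁻¹ Π_E` is the Jacobian of softmax at `0`, so this is its second-order Taylor remainder. -/
noncomputable def softmaxRemainder (z : EuclideanSpace ℝ (Fin E)) : EuclideanSpace ℝ (Fin E) :=
  softmax z - (E : ℝ)⁻¹ • onesE E - (E : ℝ)⁻¹ • matApp (projE E) z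

lemma softmaxRemainder_apply (z : EuclideanSpace ℝ (Fin E)) (e : Fin E) :
    softmaxRemainder z e =
      exp (z e) / ∑ j, exp (z j) - (E : ℝ)⁻¹ - (E : ℝ)⁻¹ * (z e - (E : ℝ)⁻¹ * ∑ j, z j) := by
  simp [softmaxRemainder, softmax, onesE, projE_apply]

lemma abs_softmaxRemainder_apply_le {z : EuclideanSpace ℝ (Fin E)} (hz : ‖z‖ ≤ 1) (e : Fin E) :
    |softmaxRemainder z e| ≤ 6 * exp 1 * ‖z‖ ^ 2 := by
  have hE : (1 : ℝ) ≤ E := Nat.one_le_cast.mpr e.pos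
  set n := ‖z‖
  have hzn : ∀ j, |z j| ≤ n := EuclideanSpace.abs_apply_le_norm z
  set r : Fin E → ℝ := fun j => exp (z j) - 1 - z j
  have hr : ∀ j, |r j| ≤ z j ^ 2 := fun j => abs_exp_sub_one_sub_id_le ((hzn j).trans hz)
  set Z := ∑ j, z j
  set R := ∑ j, r j
  set S := ∑ j, exp (z j)
  have hS : S = E + Z + R := by simp [S, Z, R, r, sum_sub_distrib]
  have hSe : exp (z e) ≤ S := single_le_sum (fun j _ => (exp_pos (z j)).le) (mem_univ e)
  have hS1 : 1 ≤ exp 1 * S :=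
    calc 1 ≤ exp (1 + z e) := one_le_exp (by linarith [neg_abs_le (z e), (hzn e).trans hz])
      _ = exp 1 * exp (z e) := exp_add _ _
      _ ≤ exp 1 * S := by gcongr
  have hZ : |Z| ≤ E * n := by
    calc |Z| ≤ ∑ j, |z j| := abs_sum_le_sum_abs _ _
      _ ≤ ∑ _j : Fin E, n := sum_le_sum fun j _ => hzn j
      _ = E * n := by simp
  have hR : |R| ≤ n ^ 2 := by
    calc |R| ≤ ∑ j, |r j| := abs_sum_le_sum_abs _ _
      _ ≤ ∑ j, z j ^ 2 := sum_le_sum fun j _ => hr j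
      _ = n ^ 2 := (EuclideanSpace.real_norm_sq_eq z).symm
  have hre : |r e| ≤ n ^ 2 :=
    (hr e).trans (by simpa using pow_le_pow_left₀ (abs_nonneg _) (hzn e) 2)
  have hS0 : 0 < S := (exp_pos (z e)).trans_le hSe
  have hden : 0 < E ^ 2 * S := by positivity
  have hexpand : softmaxRemainder z e =
      (E ^ 2 * r e - E * R - (Z + R) * (E * z e - Z)) / (E ^ 2 * S) := by
    have hE0 : (E : ℝ) ≠ 0 := by positivity
    rw [softmaxRemainder_apply, show exp (z e) = 1 + z e + r e by ring,
      show ∑ j, exp (z j) = S from rfl]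
    rw [hS] at hS0 ⊢
    field_simp
    ring
  rw [hexpand, abs_div, abs_of_pos hden, div_le_iff₀ hden]
  calc _ ≤ 6 * E ^ 2 * n ^ 2 := abs_softmaxRemainder_numerator_le hE hz (hzn e) hre hZ hR
    _ ≤ 6 * E ^ 2 * n ^ 2 * (exp 1 * S) := le_mul_of_one_le_right (by positivity) hS1
    _ = 6 * exp 1 * n ^ 2 * (E ^ 2 * S) := by ring

lemma norm_softmaxRemainder_le {z : EuclideanSpace ℝ (Fin E)} (hz : ‖z‖ ≤ 1) :
    ‖softmaxRemainder z‖ ≤ √E * (6 * exp 1) * ‖z‖ ^ 2 := by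
  simpa [mul_assoc] using EuclideanSpace.norm_le_sqrt_card_mul_of_forall_abs_le
    (by positivity) (abs_softmaxRemainder_apply_le hz)

end Softmax

lemma inv_smul_sum_softmax_sub_eq {E N : ℕ} (hN : N ≠ 0)
    (z : Fin N → EuclideanSpace ℝ (Fin E)) :
    (N : ℝ)⁻¹ • ∑ i, softmax (z i) - (E : ℝ)⁻¹ • onesE E =
      (E : ℝ)⁻¹ • matApp (projE E) ((N : ℝ)⁻¹ • ∑ i, z i) +
        (N : ℝ)⁻¹ • ∑ i, softmaxRemainder (z i) := by
  simp only [softmaxRemainder, sum_sub_distrib, ← smul_sum, sum_const, card_univ,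
    Fintype.card_fin, matApp_smul, matApp_sum, ← Nat.cast_smul_eq_nsmul ℝ]
  match_scalars
  · rfl
  · field_simp
  · ring

theorem stmt10_general (E D : ℕ) (hE : 0 < E) :
    ∃ C > (0 : ℝ),
      ∀ (N : ℕ), 0 < N →
      ∀ (P : Matrix (Fin E) (Fin D) ℝ) (μ : EuclideanSpace ℝ (Fin D))
        (ξ : Fin N → EuclideanSpace ℝ (Fin D)), (∑ i, ξ i) = 0 →
      ∀ ε : ℝ, 0 < ε → ε ≤ 1 →
      (∀ i : Fin N, ‖matApp P (μ + ξ i)‖ ≤ ε) →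
      ‖matApp (projE E) (matApp P μ)‖ ^ 2 ≤ (E : ℝ) ^ 2 * Lbal P μ ξ + C * ε ^ 3 := by
  set M := √E * (6 * exp 1)
  refine ⟨E * M * (2 + E * M), by positivity, ?_⟩
  intro N hN P μ ξ hξ ε hε hε1 hz
  set A := (N : ℝ)⁻¹ • ∑ i, softmax (matApp P (μ + ξ i)) - (E : ℝ)⁻¹ • onesE E
  set v := matApp (projE E) (matApp P μ)
  have hL : Lbal P μ ξ = ‖A‖ ^ 2 := rfl
  have hmean : (N : ℝ)⁻¹ • ∑ i, matApp P (μ + ξ i) = matApp P μ := by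
    rw [← matApp_sum, ← matApp_smul, sum_add_distrib, hξ, add_zero, sum_const, card_univ,
      Fintype.card_fin, ← Nat.cast_smul_eq_nsmul ℝ, smul_smul, inv_mul_cancel₀ (by positivity),
      one_smul]
  have hrem : ‖(N : ℝ)⁻¹ • ∑ i, softmaxRemainder (matApp P (μ + ξ i))‖ ≤ M * ε ^ 2 :=
    norm_inv_natCast_smul_sum_le hN fun i =>
      (norm_softmaxRemainder_le ((hz i).trans hε1)).trans (by gcongr; exact hz i)
  have hv : ‖v‖ ≤ ε :=
    (norm_matApp_projE_le _).trans (hmean ▸ norm_inv_natCast_smul_sum_le hN hz)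
  have hvA : ‖v - (E : ℝ) • A‖ ≤ E * (M * ε ^ 2) := by
    have hA : A = (E : ℝ)⁻¹ • v + (N : ℝ)⁻¹ • ∑ i, softmaxRemainder (matApp P (μ + ξ i)) :=
      (inv_smul_sum_softmax_sub_eq hN.ne' _).trans (by rw [hmean])
    rw [hA, smul_add, smul_smul, mul_inv_cancel₀ (by positivity), one_smul, sub_add_cancel_left,
      norm_neg, norm_smul, RCLike.norm_natCast]
    gcongr
  calc ‖v‖ ^ 2 ≤ ‖(E : ℝ) • A‖ ^ 2 + ‖v - (E : ℝ) • A‖ * (2 * ‖v‖ + ‖v - (E : ℝ) • A‖) :=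
        norm_sq_le_norm_sq_add _ _
    _ ≤ E ^ 2 * Lbal P μ ξ + E * (M * ε ^ 2) * (2 * ε + E * (M * ε ^ 2)) := by
        rw [norm_smul, mul_pow, RCLike.norm_natCast, hL]
        gcongr
    _ ≤ E ^ 2 * Lbal P μ ξ + E * M * (2 + E * M) * ε ^ 3 := by
        have hε4 : ε ^ 4 ≤ ε ^ 3 := pow_le_pow_of_le_one hε.le hε1 (by norm_num)
        have hEM : 0 ≤ E * M := by positivity
        nlinarith [mul_le_mul_of_nonneg_left hε4 (mul_nonneg hEM hEM)]

theorem stmt10 (E D : ℕ) (hE : 0 < E) (hD : 0 < D) :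
    ∃ C > (0 : ℝ),
      ∀ (N : ℕ), 0 < N →
      ∀ (P : Matrix (Fin E) (Fin D) ℝ) (μ : EuclideanSpace ℝ (Fin D))
        (ξ : Fin N → EuclideanSpace ℝ (Fin D)), (∑ i, ξ i) = 0 →
      ∀ ε : ℝ, 0 < ε → ε ≤ 1 →
      (∀ i : Fin N, ‖matApp P (μ + ξ i)‖ ≤ ε) →
      ‖matApp (projE E) (matApp P μ)‖ ^ 2 ≤ (E : ℝ) ^ 2 * Lbal P μ ξ + C * ε ^ 3 :=
  stmt10_general E D hE
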